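/- arXiv:2012.11340 — 2 statements merged into one kernel-verified Lean document; each statement's English description precedes it below -/
import Mathlib

section
/- Under the spectral hypotheses, for every k ∈ ℕ and every s-dimensional subspace V ⊆ ℝ^d: (i) the subspaces 𝒫_{k,1}(Q_{k,1}^s V), …, 𝒫_{k,ℓ}(Q_{k,ℓ}^s V) form a direct sum, so 𝒯_k(V) = ⊕_{i=1}^ℓ 𝒫_{k,i}(Q_{k,i}^s V); (ii) 𝒯_k(V) equals the image of V under the single linear map Σ_{i=1}^ℓ 𝒫_{k,i} Q_{k,i}^s (with Q_{k,i}^s extended by the orthogonal projection of ℝ^d onto V composed appropriately, i.e. 𝒯_k(V) = (Σ_{i=1}^ℓ 𝒫_{k,i} Q_{k,i}^s)V); and (iii) dim 𝒯_k(V) = s. -/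
open Filter

noncomputable section

abbrev Euc (d : ℕ) := EuclideanSpace ℝ (Fin d)

/-- Angle between the lines spanned by two vectors. -/
noncomputable def vecAngle {d : ℕ} (v w : Euc d) : ℝ :=
  Real.arccos (|(inner ℝ v w : ℝ)| / (‖v‖ * ‖w‖))

/-- Largest principal angle between two subspaces of equal dimension. -/
noncomputable def subAngle {d : ℕ} (V W : Submodule ℝ (Euc d)) : ℝ :=
  Real.arccos (sInf {c : ℝ | ∃ v ∈ V, ‖v‖ = 1 ∧
    c = sSup {r : ℝ | ∃ w ∈ W, ‖w‖ = 1 ∧ r = (inner ℝ v w : ℝ)}})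

/-- Orthogonal projection onto a subspace, as an endomorphism of the ambient space. -/
noncomputable def projCLM {d : ℕ} (V : Submodule ℝ (Euc d)) : Euc d →L[ℝ] Euc d :=
  V.subtypeL ∘L V.orthogonalProjection

/-- Forward product `A (m+n-1) ⋯ A m`. -/
noncomputable def PhiF {d : ℕ} (A : ℕ → (Euc d →L[ℝ] Euc d)) (m : ℕ) : ℕ → (Euc d →L[ℝ] Euc d)
  | 0 => 1
  | n + 1 => A (m + n) ∘L PhiF A m n

/-- Solution operator `Φ(n,m) = A_{n-1} ⋯ A_m` for `n ≥ m`,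
`Φ(n,m) = A_n⁻¹ ⋯ A_{m-1}⁻¹` for `n < m`. -/
noncomputable def Phi {d : ℕ} (A : ℕ → (Euc d →L[ℝ] Euc d)) (n m : ℕ) : Euc d →L[ℝ] Euc d :=
  if m ≤ n then PhiF A m (n - m) else Ring.inverse (PhiF A n (m - n))

/-- `a_{m,n}(V) = Σ_{j=m}^n ∠(Φ(j-1,0)V, Φ(j,0)V)`. -/
noncomputable def angSum {d : ℕ} (A : ℕ → (Euc d →L[ℝ] Euc d)) (V : Submodule ℝ (Euc d))
    (m n : ℕ) : ℝ :=
  ∑ j ∈ Finset.Icc m n, subAngle (V.map (Phi A (j - 1) 0 : Euc d →ₗ[ℝ] Euc d)) (V.map (Phi A j 0 : Euc d →ₗ[ℝ] Euc d))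

/-- Fiber projector `𝒫_{k,i} = P_{k,i}^s − P_{k,i+1}^s`. -/
noncomputable def fiberP {d : ℕ} (P : ℕ → ℕ → (Euc d →L[ℝ] Euc d)) (k i : ℕ) :
    Euc d →L[ℝ] Euc d :=
  P k i - P k (i + 1)

/-- The spectral fiber `𝒲_k^i = range 𝒫_{k,i}`. -/
noncomputable def fiberW {d : ℕ} (P : ℕ → ℕ → (Euc d →L[ℝ] Euc d)) (k i : ℕ) :
    Submodule ℝ (Euc d) :=
  LinearMap.range (fiberP P k i : Euc d →ₗ[ℝ] Euc d)

/-- The trace space `𝒯_k(V) = Σ_{i=1}^ℓ 𝒫_{k,i}(Q_{k,i}^s V)`, where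
`Q_{k,i}^s V = range(P_{k,i}^s) ∩ V`. -/
noncomputable def traceSpace {d : ℕ} (P : ℕ → ℕ → (Euc d →L[ℝ] Euc d)) (ℓ k : ℕ)
    (V : Submodule ℝ (Euc d)) : Submodule ℝ (Euc d) :=
  ⨆ i ∈ Finset.Icc 1 ℓ, (LinearMap.range (P k i : Euc d →ₗ[ℝ] Euc d) ⊓ V).map (fiberP P k i : Euc d →ₗ[ℝ] Euc d)

/-- `V` is a trace space at time `k`: a (direct) sum of subspaces of the fibers. -/
def IsTraceAt {d : ℕ} (P : ℕ → ℕ → (Euc d →L[ℝ] Euc d)) (ℓ k : ℕ)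
    (V : Submodule ℝ (Euc d)) : Prop :=
  ∃ W : ℕ → Submodule ℝ (Euc d),
    (∀ i, 1 ≤ i → i ≤ ℓ → W i ≤ fiberW P k i) ∧ V = ⨆ i ∈ Finset.Icc 1 ℓ, W i

open Finset

/-!
Since `P_i P_j = P_{max i j}` along the flag, the fiber projectors `𝒫_i = P_i − P_{i+1}` are
mutually annihilating idempotents. Hence `𝒫_i` kills every summand of the trace space but the
`i`-th, which gives the direct sum, and it reads off the `i`-th term of `T = Σ 𝒫_i Q_i`. So if
`T v = 0` for `v ∈ V`, then `𝒫_i v = 0` pushes `v` down the flag `V ∩ range P_i`, ending in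
`V ∩ range P_{ℓ+1} = 0`: `T` is injective on `V`. On `V ∩ range P_i` the map `T` is `𝒫_i` plus
terms of the later summands, so by downward induction on `i` every summand lies in `T V`.
-/

/-- The law `p i ∘ p j = p (max i j)` packages idempotence with nested ranges and kernels. -/
structure IsProjFlag {𝕜 E : Type*} [Semiring 𝕜] [TopologicalSpace E] [AddCommMonoid E]
    [Module 𝕜 E] (p : ℕ → E →L[𝕜] E) (ℓ : ℕ) : Prop where
  comp_eq_max : ∀ i j, 1 ≤ i → i ≤ ℓ + 1 → 1 ≤ j → j ≤ ℓ + 1 → p i ∘L p j = p (max i j)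
  first : p 1 = 1
  last : p (ℓ + 1) = 0

namespace IsProjFlag

variable {𝕜 E : Type*} [Ring 𝕜] [TopologicalSpace E] [AddCommGroup E] [Module 𝕜 E]
  {p : ℕ → E →L[𝕜] E} {ℓ : ℕ}

theorem of_range_ker (hproj : ∀ i, 1 ≤ i → i ≤ ℓ + 1 → p i ∘L p i = p i)
    (hfirst : p 1 = 1) (hlast : p (ℓ + 1) = 0)
    (hrange : ∀ i, 1 ≤ i → i ≤ ℓ →
      LinearMap.range (p (i + 1) : E →ₗ[𝕜] E) ≤ LinearMap.range (p i : E →ₗ[𝕜] E))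
    (hker : ∀ i, 1 ≤ i → i ≤ ℓ →
      LinearMap.ker (p i : E →ₗ[𝕜] E) ≤ LinearMap.ker (p (i + 1) : E →ₗ[𝕜] E)) :
    IsProjFlag p ℓ := by
  have hrange' : AntitoneOn (fun i => LinearMap.range (p i : E →ₗ[𝕜] E)) (Set.Icc 1 (ℓ + 1)) :=
    antitoneOn_of_succ_le Set.ordConnected_Icc fun i _ hi hi' => by
      simp only [Set.mem_Icc, Order.succ_eq_add_one] at hi hi' ⊢
      exact hrange i hi.1 (by omega)
  have hker' : MonotoneOn (fun i => LinearMap.ker (p i : E →ₗ[𝕜] E)) (Set.Icc 1 (ℓ + 1)) :=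
    monotoneOn_of_le_succ Set.ordConnected_Icc fun i _ hi hi' => by
      simp only [Set.mem_Icc, Order.succ_eq_add_one] at hi hi' ⊢
      exact hker i hi.1 (by omega)
  have hidem (i) (hi : 1 ≤ i) (hi' : i ≤ ℓ + 1) (x : E) : p i (p i x) = p i x :=
    congr($(hproj i hi hi') x)
  have hle (i j) (hi : 1 ≤ i) (hij : i ≤ j) (hj : j ≤ ℓ + 1) :
      p i ∘L p j = p j ∧ p j ∘L p i = p j := by
    have hmi : i ∈ Set.Icc 1 (ℓ + 1) := ⟨hi, by omega⟩
    have hmj : j ∈ Set.Icc 1 (ℓ + 1) := ⟨by omega, hj⟩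
    refine ⟨ContinuousLinearMap.ext fun x => ?_, ContinuousLinearMap.ext fun x => ?_⟩
    · obtain ⟨y, hy⟩ := hrange' hmi hmj hij ⟨x, rfl⟩
      simp only [ContinuousLinearMap.coe_coe] at hy
      rw [ContinuousLinearMap.comp_apply, ← hy]
      exact hidem i hi (by omega) y
    · have hx : x - p i x ∈ LinearMap.ker (p i : E →ₗ[𝕜] E) := by
        simp [hidem i hi (by omega) x]
      have hx' : p j (x - p i x) = 0 := hker' hmi hmj hij hx
      rw [map_sub, sub_eq_zero] at hx'
      exact hx'.symm
  refine ⟨fun i j hi hi' hj hj' => ?_, hfirst, hlast⟩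
  rcases le_total i j with hij | hji
  · rw [max_eq_right hij, (hle i j hi hij hj').1]
  · rw [max_eq_left hji, (hle j i hj hji hi').2]

theorem apply_eq_self_of_mem_range (h : IsProjFlag p ℓ) {i : ℕ} (hi : 1 ≤ i) (hi' : i ≤ ℓ + 1)
    {x : E} (hx : x ∈ LinearMap.range (p i : E →ₗ[𝕜] E)) : p i x = x := by
  obtain ⟨y, rfl⟩ := hx
  simpa [max_self] using congr($(h.comp_eq_max i i hi hi' hi hi') y)

theorem range_antitone (h : IsProjFlag p ℓ) {i j : ℕ} (hi : 1 ≤ i) (hij : i ≤ j)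
    (hj : j ≤ ℓ + 1) :
    LinearMap.range (p j : E →ₗ[𝕜] E) ≤ LinearMap.range (p i : E →ₗ[𝕜] E) := by
  rintro _ ⟨y, rfl⟩
  refine ⟨p j y, ?_⟩
  simpa [max_eq_right hij] using congr($(h.comp_eq_max i j hi (by omega) (by omega) hj) y)

end IsProjFlag

section Fibers

variable {d : ℕ} {P : ℕ → ℕ → (Euc d →L[ℝ] Euc d)} {ℓ k : ℕ}

theorem fiberP_fiberP_apply (h : IsProjFlag (P k) ℓ) {i j : ℕ} (hi : 1 ≤ i) (hi' : i ≤ ℓ)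
    (hj : 1 ≤ j) (hj' : j ≤ ℓ) (x : Euc d) :
    fiberP P k i (fiberP P k j x) = if i = j then fiberP P k i x else 0 := by
  have hmax (a b) (ha : 1 ≤ a) (ha' : a ≤ ℓ + 1) (hb : 1 ≤ b) (hb' : b ≤ ℓ + 1) :
      P k a (P k b x) = P k (max a b) x :=
    congr($(h.comp_eq_max a b ha ha' hb hb') x)
  simp only [fiberP, sub_apply, map_sub]
  rw [hmax i j hi (by omega) hj (by omega), hmax i (j + 1) hi (by omega) (by omega) (by omega),
    hmax (i + 1) j (by omega) (by omega) hj (by omega),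
    hmax (i + 1) (j + 1) (by omega) (by omega) (by omega) (by omega)]
  rcases lt_trichotomy i j with hij | rfl | hij
  · rw [max_eq_right hij.le, max_eq_right (by omega : i ≤ j + 1),
      max_eq_right (by omega : i + 1 ≤ j), max_eq_right (by omega : i + 1 ≤ j + 1), if_neg hij.ne]
    abel
  · simp
  · rw [max_eq_left hij.le, max_eq_left (by omega : j + 1 ≤ i),
      max_eq_left (by omega : j ≤ i + 1), max_eq_left (by omega : j + 1 ≤ i + 1), if_neg hij.ne']
    abel

theorem sum_fiberP_Icc (i : ℕ) :
    ∑ j ∈ Icc 1 i, fiberP P k j = P k 1 - P k (i + 1) := by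
  induction i with
  | zero => simp
  | succ i ih =>
    rw [sum_Icc_succ_top (by omega), ih, fiberP]
    abel

theorem mem_range_succ_of_fiberP_eq_zero (h : IsProjFlag (P k) ℓ) {i : ℕ} (hi : 1 ≤ i)
    (hi' : i ≤ ℓ) {x : Euc d} (hx : x ∈ LinearMap.range (P k i : Euc d →ₗ[ℝ] Euc d))
    (h0 : fiberP P k i x = 0) :
    x ∈ LinearMap.range (P k (i + 1) : Euc d →ₗ[ℝ] Euc d) := by
  rw [fiberP, sub_apply, sub_eq_zero,
    h.apply_eq_self_of_mem_range hi (by omega) hx] at h0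
  exact ⟨x, h0.symm⟩

end Fibers

theorem projCLM_apply_mem {d : ℕ} (U : Submodule ℝ (Euc d)) (x : Euc d) : projCLM U x ∈ U :=
  Submodule.coe_mem _

theorem projCLM_apply_of_mem {d : ℕ} {U : Submodule ℝ (Euc d)} {x : Euc d} (hx : x ∈ U) :
    projCLM U x = x :=
  U.starProjection_eq_self_iff.mpr hx

theorem Submodule.finrank_map_of_disjoint_ker {K M N : Type*} [DivisionRing K]
    [AddCommGroup M] [Module K M] [AddCommGroup N] [Module K N] {f : M →ₗ[K] N}
    {p : Submodule K M} (h : Disjoint p (LinearMap.ker f)) :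
    Module.finrank K (p.map f) = Module.finrank K p := by
  rw [← LinearMap.range_domRestrict]
  exact LinearMap.finrank_range_of_inj (LinearMap.injective_domRestrict_iff.mpr h)

section Trace

variable {d : ℕ} {P : ℕ → ℕ → (Euc d →L[ℝ] Euc d)} {ℓ k : ℕ} {V : Submodule ℝ (Euc d)}

/-- The slice `range(P_{k,i}^s) ∩ V`, onto which `Q_{k,i}^s` projects. -/
def flagSlice (P : ℕ → ℕ → (Euc d →L[ℝ] Euc d)) (k : ℕ) (V : Submodule ℝ (Euc d)) (i : ℕ) :
    Submodule ℝ (Euc d) :=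
  LinearMap.range (P k i : Euc d →ₗ[ℝ] Euc d) ⊓ V

/-- The map `Σ_{i=1}^ℓ 𝒫_{k,i} Q_{k,i}^s`. -/
def traceMap (P : ℕ → ℕ → (Euc d →L[ℝ] Euc d)) (ℓ k : ℕ) (V : Submodule ℝ (Euc d)) :
    Euc d →L[ℝ] Euc d :=
  ∑ i ∈ Icc 1 ℓ, fiberP P k i ∘L projCLM (flagSlice P k V i)

theorem traceMap_apply (x : Euc d) :
    traceMap P ℓ k V x = ∑ i ∈ Icc 1 ℓ, fiberP P k i (projCLM (flagSlice P k V i) x) := by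
  simp [traceMap]

theorem flagSlice_antitone (h : IsProjFlag (P k) ℓ) {i j : ℕ} (hi : 1 ≤ i) (hij : i ≤ j)
    (hj : j ≤ ℓ + 1) : flagSlice P k V j ≤ flagSlice P k V i :=
  inf_le_inf_right V (h.range_antitone hi hij hj)

theorem fiberP_traceMap (h : IsProjFlag (P k) ℓ) {i : ℕ} (hi : 1 ≤ i) (hi' : i ≤ ℓ)
    (x : Euc d) :
    fiberP P k i (traceMap P ℓ k V x) = fiberP P k i (projCLM (flagSlice P k V i) x) := by
  rw [traceMap_apply, map_sum, sum_eq_single i]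
  · simp [fiberP_fiberP_apply h hi hi' hi hi']
  · intro j hj hji
    rw [mem_Icc] at hj
    simp [fiberP_fiberP_apply h hi hi' hj.1 hj.2, hji.symm]
  · intro hi''
    exact absurd (mem_Icc.mpr ⟨hi, hi'⟩) hi''

theorem disjoint_ker_traceMap (h : IsProjFlag (P k) ℓ) :
    Disjoint V (LinearMap.ker (traceMap P ℓ k V : Euc d →ₗ[ℝ] Euc d)) := by
  refine LinearMap.disjoint_ker.mpr fun x hxV (hx0 : traceMap P ℓ k V x = 0) => ?_
  have hslice : ∀ i ≤ ℓ, x ∈ flagSlice P k V (i + 1) := by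
    intro i
    induction i with
    | zero => exact fun _ => ⟨by simp [h.first], hxV⟩
    | succ i ih =>
      intro hi
      have hx : x ∈ flagSlice P k V (i + 1) := ih (by omega)
      have hfib : fiberP P k (i + 1) x = 0 := by
        rw [← projCLM_apply_of_mem hx, ← fiberP_traceMap h (by omega) hi, hx0, map_zero]
      exact ⟨mem_range_succ_of_fiberP_eq_zero h (by omega) hi hx.1 hfib, hxV⟩
  simpa [h.last] using (hslice ℓ le_rfl).1

theorem traceMap_apply_of_mem_flagSlice (h : IsProjFlag (P k) ℓ) {i : ℕ} (hi : 1 ≤ i)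
    (hi' : i ≤ ℓ) {w : Euc d} (hw : w ∈ flagSlice P k V i) :
    traceMap P ℓ k V w =
      fiberP P k i w + ∑ j ∈ Ioc i ℓ, fiberP P k j (projCLM (flagSlice P k V j) w) := by
  have hlow : ∑ j ∈ Icc 1 i, fiberP P k j (projCLM (flagSlice P k V j) w) = fiberP P k i w := by
    calc ∑ j ∈ Icc 1 i, fiberP P k j (projCLM (flagSlice P k V j) w)
        = (∑ j ∈ Icc 1 i, fiberP P k j) w := by
          rw [_root_.sum_apply]
          refine sum_congr rfl fun j hj => ?_
          rw [mem_Icc] at hj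
          rw [projCLM_apply_of_mem (flagSlice_antitone h hj.1 hj.2 (by omega) hw)]
      _ = fiberP P k i w := by
          rw [sum_fiberP_Icc, h.first, fiberP, sub_apply, sub_apply,
            h.apply_eq_self_of_mem_range hi (by omega) hw.1, one_apply_eq_self]
  rw [traceMap_apply, ← hlow, show Icc 1 ℓ = Ioc 0 ℓ from Icc_add_one_left_eq_Ioc 0 ℓ,
    show Icc 1 i = Ioc 0 i from Icc_add_one_left_eq_Ioc 0 i]
  exact (sum_Ioc_consecutive _ (Nat.zero_le i) hi').symm

theorem map_flagSlice_le_map_traceMap (h : IsProjFlag (P k) ℓ) {i : ℕ} (hi : 1 ≤ i)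
    (hi' : i ≤ ℓ) :
    (flagSlice P k V i).map (fiberP P k i : Euc d →ₗ[ℝ] Euc d) ≤
      V.map (traceMap P ℓ k V : Euc d →ₗ[ℝ] Euc d) := by
  rintro _ ⟨w, hw, rfl⟩
  have hsplit : fiberP P k i w = traceMap P ℓ k V w -
      ∑ j ∈ Ioc i ℓ, fiberP P k j (projCLM (flagSlice P k V j) w) := by
    rw [traceMap_apply_of_mem_flagSlice h hi hi' hw, add_sub_cancel_right]
  change fiberP P k i w ∈ _
  rw [hsplit]
  refine Submodule.sub_mem _ ⟨w, hw.2, rfl⟩ (Submodule.sum_mem _ fun j hj => ?_)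
  have hij : i < j ∧ j ≤ ℓ := mem_Ioc.mp hj
  exact map_flagSlice_le_map_traceMap h (by omega) hij.2
    ⟨_, projCLM_apply_mem (flagSlice P k V j) w, rfl⟩
termination_by ℓ - i

theorem traceSpace_eq_map_traceMap (h : IsProjFlag (P k) ℓ) :
    traceSpace P ℓ k V = V.map (traceMap P ℓ k V : Euc d →ₗ[ℝ] Euc d) := by
  refine le_antisymm (iSup₂_le fun i hi => ?_) ?_
  · rw [mem_Icc] at hi
    exact map_flagSlice_le_map_traceMap h hi.1 hi.2
  · rintro _ ⟨v, -, rfl⟩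
    change traceMap P ℓ k V v ∈ _
    rw [traceMap_apply]
    refine Submodule.sum_mem _ fun i hi => Submodule.mem_iSup_of_mem i ?_
    exact Submodule.mem_iSup_of_mem hi
      (Submodule.mem_map_of_mem (projCLM_apply_mem (flagSlice P k V i) v))

theorem disjoint_map_flagSlice_iSup (h : IsProjFlag (P k) ℓ) {i : ℕ} (hi : 1 ≤ i) (hi' : i ≤ ℓ) :
    Disjoint ((flagSlice P k V i).map (fiberP P k i : Euc d →ₗ[ℝ] Euc d))
      (⨆ j ∈ (Icc 1 ℓ).erase i, (flagSlice P k V j).map (fiberP P k j : Euc d →ₗ[ℝ] Euc d)) := by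
  have hidem : IsIdempotentElem (fiberP P k i : Euc d →ₗ[ℝ] Euc d) :=
    LinearMap.ext fun x => by simpa using fiberP_fiberP_apply h hi hi' hi hi' x
  refine (LinearMap.IsIdempotentElem.isCompl hidem).disjoint.mono LinearMap.map_le_range (iSup₂_le fun j hj => ?_)
  obtain ⟨hji, hj⟩ := mem_erase.mp hj
  rw [mem_Icc] at hj
  rintro _ ⟨w, -, rfl⟩
  simp [fiberP_fiberP_apply h hi hi' hj.1 hj.2, hji.symm]

theorem finrank_traceSpace (h : IsProjFlag (P k) ℓ) :
    Module.finrank ℝ (traceSpace P ℓ k V) = Module.finrank ℝ V := by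
  rw [traceSpace_eq_map_traceMap h, Submodule.finrank_map_of_disjoint_ker (disjoint_ker_traceMap h)]

end Trace

theorem traceSpace_directSum_rep_dim_general
    {d : ℕ}
    (ℓ : ℕ)
    (P : ℕ → ℕ → (Euc d →L[ℝ] Euc d))
    (hproj : ∀ n i, 1 ≤ i → i ≤ ℓ + 1 → P n i ∘L P n i = P n i)
    (hP1 : ∀ n, P n 1 = 1)
    (hPl : ∀ n, P n (ℓ + 1) = 0)
    (hrange : ∀ n i, 1 ≤ i → i ≤ ℓ → LinearMap.range (P n (i + 1) : Euc d →ₗ[ℝ] Euc d) ≤ LinearMap.range (P n i : Euc d →ₗ[ℝ] Euc d))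
    (hker : ∀ n i, 1 ≤ i → i ≤ ℓ → LinearMap.ker (P n i : Euc d →ₗ[ℝ] Euc d) ≤ LinearMap.ker (P n (i + 1) : Euc d →ₗ[ℝ] Euc d))
    (k s : ℕ) (V : Submodule ℝ (Euc d)) (hV : Module.finrank ℝ V = s) :
    (∀ i, 1 ≤ i → i ≤ ℓ →
      Disjoint ((LinearMap.range (P k i : Euc d →ₗ[ℝ] Euc d) ⊓ V).map (fiberP P k i : Euc d →ₗ[ℝ] Euc d))
        (⨆ j ∈ (Finset.Icc 1 ℓ).erase i,
          (LinearMap.range (P k j : Euc d →ₗ[ℝ] Euc d) ⊓ V).map (fiberP P k j : Euc d →ₗ[ℝ] Euc d))) ∧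
    traceSpace P ℓ k V =
      V.map ((∑ i ∈ Finset.Icc 1 ℓ, fiberP P k i ∘L projCLM (LinearMap.range (P k i : Euc d →ₗ[ℝ] Euc d) ⊓ V) : Euc d →L[ℝ] Euc d) : Euc d →ₗ[ℝ] Euc d) ∧
    Module.finrank ℝ (traceSpace P ℓ k V) = s := by
  have h : IsProjFlag (P k) ℓ :=
    .of_range_ker (hproj k) (hP1 k) (hPl k) (hrange k) (hker k)
  exact ⟨fun i hi hi' => disjoint_map_flagSlice_iSup h hi hi', traceSpace_eq_map_traceMap h,
    (finrank_traceSpace h).trans hV⟩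

/-- Under the spectral hypotheses, for every `k` and every `s`-dimensional
subspace `V`: (i) the subspaces `𝒫_{k,i}(Q_{k,i}^s V)`, `i = 1,…,ℓ`, form a direct sum;
(ii) `𝒯_k(V)` is the image of `V` under the single linear map `Σ_i 𝒫_{k,i} Q_{k,i}^s`
(with `Q_{k,i}^s` the orthogonal projection onto `range(P_{k,i}^s) ∩ V`); and
(iii) `dim 𝒯_k(V) = s`. -/
theorem traceSpace_directSum_rep_dim
    {d : ℕ} (A : ℕ → (Euc d →L[ℝ] Euc d)) (hA : ∀ n, IsUnit (A n))
    (hbd : ∃ Cb : ℝ, ∀ n, ‖A n‖ + ‖Ring.inverse (A n)‖ ≤ Cb)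
    (ℓ : ℕ) (hℓ : 1 ≤ ℓ) (K : ℝ) (hK : 1 ≤ K)
    (σm σp : ℕ → ℝ)
    (hσ0 : ∀ i, 1 ≤ i → i ≤ ℓ → 0 < σm i)
    (hσ1 : ∀ i, 1 ≤ i → i ≤ ℓ → σm i ≤ σp i)
    (hσ2 : ∀ i, 1 ≤ i → i < ℓ → σp (i + 1) < σm i)
    (P : ℕ → ℕ → (Euc d →L[ℝ] Euc d))
    (hproj : ∀ n i, 1 ≤ i → i ≤ ℓ + 1 → P n i ∘L P n i = P n i)
    (hP1 : ∀ n, P n 1 = 1)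
    (hPl : ∀ n, P n (ℓ + 1) = 0)
    (hcomm : ∀ n m i, 1 ≤ i → i ≤ ℓ + 1 → P n i ∘L Phi A n m = Phi A n m ∘L P m i)
    (hrange : ∀ n i, 1 ≤ i → i ≤ ℓ → LinearMap.range (P n (i + 1) : Euc d →ₗ[ℝ] Euc d) ≤ LinearMap.range (P n i : Euc d →ₗ[ℝ] Euc d))
    (hker : ∀ n i, 1 ≤ i → i ≤ ℓ → LinearMap.ker (P n i : Euc d →ₗ[ℝ] Euc d) ≤ LinearMap.ker (P n (i + 1) : Euc d →ₗ[ℝ] Euc d))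
    (hbndS : ∀ i, 1 ≤ i → i ≤ ℓ → ∀ n m : ℕ, m ≤ n →
      ‖Phi A n m ∘L P m (i + 1)‖ ≤ K * (if i = ℓ then (0 : ℝ) else σp (i + 1)) ^ (n - m))
    (hbndU : ∀ i, 1 ≤ i → i ≤ ℓ → ∀ n m : ℕ, m ≤ n →
      ‖Phi A m n ∘L (1 - P n (i + 1))‖ ≤ K * (σm i ^ (n - m))⁻¹)
    (k s : ℕ) (V : Submodule ℝ (Euc d)) (hV : Module.finrank ℝ V = s) :
    (∀ i, 1 ≤ i → i ≤ ℓ →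
      Disjoint ((LinearMap.range (P k i : Euc d →ₗ[ℝ] Euc d) ⊓ V).map (fiberP P k i : Euc d →ₗ[ℝ] Euc d))
        (⨆ j ∈ (Finset.Icc 1 ℓ).erase i,
          (LinearMap.range (P k j : Euc d →ₗ[ℝ] Euc d) ⊓ V).map (fiberP P k j : Euc d →ₗ[ℝ] Euc d))) ∧
    traceSpace P ℓ k V =
      V.map ((∑ i ∈ Finset.Icc 1 ℓ, fiberP P k i ∘L projCLM (LinearMap.range (P k i : Euc d →ₗ[ℝ] Euc d) ⊓ V) : Euc d →L[ℝ] Euc d) : Euc d →ₗ[ℝ] Euc d) ∧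
    Module.finrank ℝ (traceSpace P ℓ k V) = s :=
  traceSpace_directSum_rep_dim_general ℓ P hproj hP1 hPl hrange hker k s V hV
end
end

section
/- Under the spectral hypotheses, define for a subspace V ⊆ ℝ^d the quantity θ̄_1(V) := limsup_{n→∞} sup_{v∈V, v≠0} (1/n) a_{1,n}(v), where a_{m,n}(v) := Σ_{j=m}^{n} ∠(Φ(j−1,0)v, Φ(j,0)v) (angles between lines). Assume that for each i = 1,…,ℓ the inner and uniform inner angular values agree within the fiber 𝒲_0^i, i.e. θ̄_1(𝒲_0^i) = lim_{n→∞} (1/n) sup_{v∈𝒲_0^i, v≠0} sup_{k∈ℕ} a_{k+1,k+n}(v). Then the first inner angular value satisfies θ̄_1(ℝ^d) = max_{i=1,…,ℓ} θ̄_1(𝒲_0^i). -/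
open Filter

noncomputable section

/-- `a_{m,n}(v) = Σ_{j=m}^n ∠(Φ(j-1,0)v, Φ(j,0)v)` (angles between lines); `0` for `m > n`. -/
noncomputable def aVec {d : ℕ} (A : ℕ → (Euc d →L[ℝ] Euc d)) (v : Euc d) (m n : ℕ) : ℝ :=
  ∑ j ∈ Finset.Icc m n, vecAngle (Phi A (j - 1) 0 v) (Phi A j 0 v)

/-- The first inner angular value of a subspace:
`θ̄₁(V) = limsup_n sup_{v∈V, v≠0} (1/n) a_{1,n}(v)`. -/
noncomputable def thetaBar1 {d : ℕ} (A : ℕ → (Euc d →L[ℝ] Euc d))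
    (V : Submodule ℝ (Euc d)) : ℝ :=
  limsup (fun n : ℕ => sSup {x : ℝ | ∃ v ∈ V, v ≠ 0 ∧ x = aVec A v 1 n / n}) atTop

/-! Monotonicity of `thetaBar1` in the subspace gives `≥`. For `≤`, the uniform hypothesis on a
fiber bounds the angle sums of its vectors over *every* window `k+1, …, k+n` by `n (M + ε) + C`,
uniformly in the start `k`. One then descends through `range P_{0,ℓ} ⊆ ⋯ ⊆ range P_{0,1} = ℝ^d`:
a vector of `range P_{0,i}` splits as `u + r` with `u ∈ 𝒲_0^i` and `r ∈ range P_{0,i+1}`, and by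
the dichotomy `‖Φ(n,0) r‖ / ‖Φ(n,0) u‖` decays geometrically. So up to a crossing time `τ` the
trajectory of `u + r` is `δ`-close in angle to that of `r`, after `τ + s` (with `s` independent
of the vector) it is `δ`-close to that of `u`, and the `s + 1` steps in between cost at most
`(s + 1) π / 2`. Each level of the descent adds `2 arccos ((1 - δ) / (1 + δ))` to the rate, which
vanishes as `δ → 0`. -/

open Topology InnerProductGeometry Real
open scoped RealInnerProductSpace

section VecAngle

variable {d : ℕ}

theorem vecAngle_eq_min_angle (v w : Euc d) :
    vecAngle v w = min (angle v w) (angle v (-w)) := by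
  have key : ∀ t : ℝ, arccos |t| = min (arccos t) (arccos (-t)) := by
    intro t
    rcases le_total 0 t with ht | ht
    · rw [abs_of_nonneg ht, min_eq_left (antitone_arccos (by linarith))]
    · rw [abs_of_nonpos ht, min_eq_right (antitone_arccos (by linarith))]
  rw [vecAngle, angle, angle, inner_neg_right, norm_neg, neg_div, ← key, abs_div,
    abs_of_nonneg (by positivity : 0 ≤ ‖v‖ * ‖w‖)]

theorem vecAngle_le_angle (v w : Euc d) : vecAngle v w ≤ angle v w :=
  (vecAngle_eq_min_angle v w).trans_le (min_le_left _ _)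

theorem vecAngle_le_angle_smul (v w : Euc d) {s : ℝ} (hs : |s| = 1) :
    vecAngle v w ≤ angle v (s • w) := by
  rcases abs_eq (zero_le_one' ℝ) |>.1 hs with rfl | rfl
  · simp [vecAngle_le_angle v w]
  · simp [vecAngle_eq_min_angle]

theorem exists_angle_smul_eq_vecAngle (v w : Euc d) :
    ∃ s : ℝ, |s| = 1 ∧ angle v (s • w) = vecAngle v w := by
  rcases min_choice (angle v w) (angle v (-w)) with h | h
  · exact ⟨1, by norm_num, by rw [one_smul, vecAngle_eq_min_angle, h]⟩
  · exact ⟨-1, by norm_num, by rw [neg_one_smul, vecAngle_eq_min_angle, h]⟩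

theorem vecAngle_nonneg (v w : Euc d) : 0 ≤ vecAngle v w := arccos_nonneg _

theorem vecAngle_le_pi_div_two (v w : Euc d) : vecAngle v w ≤ π / 2 :=
  arccos_le_pi_div_two.2 (by positivity)

theorem vecAngle_comm (v w : Euc d) : vecAngle v w = vecAngle w v := by
  rw [vecAngle, vecAngle, real_inner_comm, mul_comm]

theorem vecAngle_le_vecAngle_add_vecAngle (x y z : Euc d) :
    vecAngle x z ≤ vecAngle x y + vecAngle y z := by
  obtain ⟨s, hs, hxy⟩ := exists_angle_smul_eq_vecAngle x y
  obtain ⟨t, ht, hyz⟩ := exists_angle_smul_eq_vecAngle y z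
  have hs0 : s ≠ 0 := by rintro rfl; simp at hs
  calc vecAngle x z ≤ angle x ((s * t) • z) :=
        vecAngle_le_angle_smul x z (by rw [abs_mul, hs, ht, one_mul])
    _ ≤ angle x (s • y) + angle (s • y) ((s * t) • z) := angle_le_angle_add_angle _ _ _
    _ = vecAngle x y + vecAngle y z := by rw [mul_smul, angle_smul_smul hs0, hxy, hyz]

def perturbationAngle (δ : ℝ) : ℝ := arccos ((1 - δ) / (1 + δ))

theorem perturbationAngle_nonneg (δ : ℝ) : 0 ≤ perturbationAngle δ := arccos_nonneg _

theorem tendsto_perturbationAngle_zero : Tendsto perturbationAngle (𝓝 0) (𝓝 0) := by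
  have h : ContinuousAt perturbationAngle 0 := by
    unfold perturbationAngle
    fun_prop (disch := norm_num)
  simpa [perturbationAngle] using h.tendsto

theorem vecAngle_add_le_perturbationAngle {w e : Euc d} {δ : ℝ} (hw : w ≠ 0) (hδ : δ < 1)
    (he : ‖e‖ ≤ δ * ‖w‖) : vecAngle (w + e) w ≤ perturbationAngle δ := by
  refine (vecAngle_le_angle _ _).trans (antitone_arccos ?_)
  have hw0 : 0 < ‖w‖ := norm_pos_iff.2 hw
  have hδ0 : 0 ≤ δ := nonneg_of_mul_nonneg_left ((norm_nonneg e).trans he) hw0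
  have hinner : (1 - δ) * ‖w‖ ^ 2 ≤ ⟪w + e, w⟫ := by
    have := abs_real_inner_le_norm e w
    rw [inner_add_left, real_inner_self_eq_norm_sq]
    nlinarith [neg_abs_le ⟪e, w⟫]
  have hnorm : ‖w + e‖ ≤ (1 + δ) * ‖w‖ := (norm_add_le _ _).trans (by linarith)
  have hsum : 0 < ‖w + e‖ := by
    have := real_inner_le_norm (w + e) w
    by_contra! h
    nlinarith [mul_pos (sub_pos.2 hδ) (pow_pos hw0 2), mul_le_mul_of_nonneg_right h hw0.le]
  rw [div_le_div_iff₀ (by linarith) (by positivity)]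
  calc (1 - δ) * (‖w + e‖ * ‖w‖) ≤ (1 - δ) * ((1 + δ) * ‖w‖ * ‖w‖) := by gcongr
    _ = (1 - δ) * ‖w‖ ^ 2 * (1 + δ) := by ring
    _ ≤ ⟪w + e, w⟫ * (1 + δ) := by gcongr

theorem vecAngle_add_add_le {w w' e e' : Euc d} {δ : ℝ} (hw : w ≠ 0) (hw' : w' ≠ 0)
    (hδ : δ < 1) (he : ‖e‖ ≤ δ * ‖w‖) (he' : ‖e'‖ ≤ δ * ‖w'‖) :
    vecAngle (w + e) (w' + e') ≤ vecAngle w w' + 2 * perturbationAngle δ := by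
  have h := vecAngle_add_le_perturbationAngle hw hδ he
  have h' := vecAngle_add_le_perturbationAngle hw' hδ he'
  have t1 := vecAngle_le_vecAngle_add_vecAngle (w + e) w (w' + e')
  have t2 := vecAngle_le_vecAngle_add_vecAngle w w' (w' + e')
  rw [vecAngle_comm w'] at t2
  linarith

end VecAngle

section SolutionOperator

variable {d : ℕ} {A : ℕ → (Euc d →L[ℝ] Euc d)}

theorem PhiF_add (m a b : ℕ) : PhiF A m (a + b) = PhiF A (m + a) b ∘L PhiF A m a := by
  induction b with
  | zero => rfl
  | succ b ih => rw [← add_assoc, PhiF, ih, PhiF, add_assoc, ContinuousLinearMap.comp_assoc]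

theorem isUnit_PhiF (hA : ∀ n, IsUnit (A n)) (m n : ℕ) : IsUnit (PhiF A m n) := by
  induction n with
  | zero => exact isUnit_one
  | succ n ih => exact (hA _).mul ih

theorem Phi_of_le {m n : ℕ} (h : m ≤ n) : Phi A n m = PhiF A m (n - m) := if_pos h

theorem Phi_comp_Phi_zero {m n : ℕ} (h : m ≤ n) : Phi A n m ∘L Phi A m 0 = Phi A n 0 := by
  have := PhiF_add (A := A) 0 m (n - m)
  rw [zero_add, Nat.add_sub_cancel' h] at this
  rw [Phi_of_le h, Phi_of_le m.zero_le, Phi_of_le n.zero_le, Nat.sub_zero, Nat.sub_zero, this]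

theorem Phi_comp_Phi_eq_one (hA : ∀ n, IsUnit (A n)) {m n : ℕ} (h : m ≤ n) :
    Phi A m n ∘L Phi A n m = 1 := by
  rcases h.eq_or_lt with rfl | hlt
  · rw [Phi_of_le le_rfl, Nat.sub_self]; rfl
  · rw [Phi, if_neg hlt.not_ge, Phi_of_le h]
    exact Ring.inverse_mul_cancel _ (isUnit_PhiF hA m (n - m))

theorem Phi_comp_Phi_zero_of_isUnit (hA : ∀ n, IsUnit (A n)) {m n : ℕ} (h : m ≤ n) :
    Phi A m n ∘L Phi A n 0 = Phi A m 0 := by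
  rw [← Phi_comp_Phi_zero h, ← ContinuousLinearMap.comp_assoc, Phi_comp_Phi_eq_one hA h]
  rfl

theorem Phi_zero_apply_ne_zero (hA : ∀ n, IsUnit (A n)) (n : ℕ) {v : Euc d} (hv : v ≠ 0) :
    Phi A n 0 v ≠ 0 := by
  intro h
  apply hv
  have := DFunLike.congr_fun (Phi_comp_Phi_eq_one hA n.zero_le) v
  rwa [ContinuousLinearMap.comp_apply, h, map_zero, eq_comm] at this

end SolutionOperator

section AngleSums

variable {d : ℕ} {A : ℕ → (Euc d →L[ℝ] Euc d)}

theorem aVec_nonneg (v : Euc d) (m n : ℕ) : 0 ≤ aVec A v m n :=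
  Finset.sum_nonneg fun _ _ => vecAngle_nonneg _ _

theorem aVec_window_le (v : Euc d) (k n : ℕ) : aVec A v (k + 1) (k + n) ≤ n * (π / 2) := by
  have h := Finset.sum_le_card_nsmul (Finset.Icc (k + 1) (k + n))
    (fun j => vecAngle (Phi A (j - 1) 0 v) (Phi A j 0 v)) (π / 2)
    (fun j _ => vecAngle_le_pi_div_two _ _)
  rwa [Nat.card_Icc, show k + n + 1 - (k + 1) = n by omega, nsmul_eq_mul] at h

theorem aVec_window_add (v : Euc d) (k m n : ℕ) :
    aVec A v (k + 1) (k + (m + n)) =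
      aVec A v (k + 1) (k + m) + aVec A v (k + m + 1) (k + m + n) := by
  simp only [aVec, Finset.Icc_add_one_left_eq_Ioc, ← add_assoc]
  exact (Finset.sum_Ioc_consecutive _ (by omega) (by omega)).symm

theorem aVec_window_le_of_step_le {v w : Euc d} {k n : ℕ} {c : ℝ}
    (h : ∀ j, k < j → j ≤ k + n →
      vecAngle (Phi A (j - 1) 0 v) (Phi A j 0 v) ≤ vecAngle (Phi A (j - 1) 0 w) (Phi A j 0 w) + c) :
    aVec A v (k + 1) (k + n) ≤ aVec A w (k + 1) (k + n) + n * c := by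
  unfold aVec
  calc _ ≤ ∑ j ∈ Finset.Icc (k + 1) (k + n),
        (vecAngle (Phi A (j - 1) 0 w) (Phi A j 0 w) + c) :=
        Finset.sum_le_sum fun j hj => h j (by grind) (Finset.mem_Icc.1 hj).2
    _ = _ := by
      rw [Finset.sum_add_distrib, Finset.sum_const, Nat.card_Icc,
        show k + n + 1 - (k + 1) = n by omega, nsmul_eq_mul]

end AngleSums

section AngularValue

variable {d : ℕ} {A : ℕ → (Euc d →L[ℝ] Euc d)}

def meanAngleSup (A : ℕ → (Euc d →L[ℝ] Euc d)) (V : Submodule ℝ (Euc d)) (n : ℕ) : ℝ :=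
  sSup {x : ℝ | ∃ v ∈ V, v ≠ 0 ∧ x = aVec A v 1 n / n}

theorem thetaBar1_eq_limsup (V : Submodule ℝ (Euc d)) :
    thetaBar1 A V = limsup (meanAngleSup A V) atTop := rfl

theorem meanAngleSup_nonneg (V : Submodule ℝ (Euc d)) (n : ℕ) : 0 ≤ meanAngleSup A V n :=
  Real.sSup_nonneg fun _ ⟨v, _, _, hx⟩ => hx ▸ div_nonneg (aVec_nonneg v 1 n) n.cast_nonneg

theorem meanAngleSup_le {V : Submodule ℝ (Euc d)} {n : ℕ} {b : ℝ} (hb : 0 ≤ b)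
    (h : ∀ v ∈ V, v ≠ 0 → aVec A v 1 n ≤ n * b) : meanAngleSup A V n ≤ b := by
  refine Real.sSup_le ?_ hb
  rintro _ ⟨v, hv, hv0, rfl⟩
  rcases n.eq_zero_or_pos with rfl | hn
  · simpa using hb
  · rw [div_le_iff₀ (by positivity), mul_comm]
    exact h v hv hv0

theorem aVec_div_le_pi_div_two (v : Euc d) (n : ℕ) : aVec A v 1 n / n ≤ π / 2 := by
  rcases n.eq_zero_or_pos with rfl | hn
  · simpa using pi_div_two_pos.le
  · rw [div_le_iff₀ (by positivity), mul_comm]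
    simpa using aVec_window_le (A := A) v 0 n

theorem meanAngleSup_le_pi_div_two (V : Submodule ℝ (Euc d)) (n : ℕ) :
    meanAngleSup A V n ≤ π / 2 :=
  Real.sSup_le (by rintro _ ⟨v, -, -, rfl⟩; exact aVec_div_le_pi_div_two v n) pi_div_two_pos.le

theorem meanAngleSup_mono {V W : Submodule ℝ (Euc d)} (hVW : V ≤ W) (n : ℕ) :
    meanAngleSup A V n ≤ meanAngleSup A W n := by
  have hbdd : BddAbove {x : ℝ | ∃ w ∈ W, w ≠ 0 ∧ x = aVec A w 1 n / n} :=
    ⟨π / 2, by rintro _ ⟨w, -, -, rfl⟩; exact aVec_div_le_pi_div_two w n⟩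
  exact Real.sSup_le (fun x ⟨v, hv, hv0, hx⟩ => le_csSup hbdd ⟨v, hVW hv, hv0, hx⟩)
    (meanAngleSup_nonneg W n)

theorem thetaBar1_nonneg (V : Submodule ℝ (Euc d)) : 0 ≤ thetaBar1 A V :=
  le_limsup_of_frequently_le (Frequently.of_forall (meanAngleSup_nonneg V))
    (isBoundedUnder_of ⟨π / 2, meanAngleSup_le_pi_div_two V⟩)

theorem thetaBar1_mono {V W : Submodule ℝ (Euc d)} (hVW : V ≤ W) :
    thetaBar1 A V ≤ thetaBar1 A W :=
  limsup_le_limsup (Eventually.of_forall (meanAngleSup_mono hVW))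
    (isBoundedUnder_of ⟨0, meanAngleSup_nonneg V⟩).isCoboundedUnder_le
    (isBoundedUnder_of ⟨π / 2, meanAngleSup_le_pi_div_two W⟩)

def UniformAngleBound (A : ℕ → (Euc d →L[ℝ] Euc d)) (S : Set (Euc d)) (ρ : ℝ) : Prop :=
  ∃ C ≥ 0, ∀ v ∈ S, v ≠ 0 → ∀ k n : ℕ, aVec A v (k + 1) (k + n) ≤ n * ρ + C

theorem UniformAngleBound.mono {S T : Set (Euc d)} {ρ ρ' : ℝ} (h : UniformAngleBound A S ρ)
    (hTS : T ⊆ S) (hρ : ρ ≤ ρ') : UniformAngleBound A T ρ' :=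
  let ⟨C, hC0, hC⟩ := h
  ⟨C, hC0, fun v hv hv0 k n => (hC v (hTS hv) hv0 k n).trans (by gcongr)⟩

theorem thetaBar1_le_of_uniformAngleBound {V : Submodule ℝ (Euc d)} {ρ : ℝ} (hρ : 0 ≤ ρ)
    (h : UniformAngleBound A V ρ) : thetaBar1 A V ≤ ρ := by
  obtain ⟨C, hC0, hC⟩ := h
  have hlim : Tendsto (fun n : ℕ => ρ + C / n) atTop (𝓝 ρ) := by
    simpa using tendsto_const_nhds.add (tendsto_const_div_atTop_nhds_zero_nat C)
  rw [thetaBar1_eq_limsup, ← hlim.limsup_eq]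
  refine limsup_le_limsup ((eventually_gt_atTop 0).mono fun n hn => ?_)
    (isBoundedUnder_of ⟨0, meanAngleSup_nonneg V⟩).isCoboundedUnder_le hlim.isBoundedUnder_le
  refine meanAngleSup_le (by positivity) fun v hv hv0 => ?_
  have := hC v hv hv0 0 n
  rw [zero_add, zero_add] at this
  rwa [mul_add, mul_div_cancel₀ _ (by positivity)]

theorem uniformAngleBound_of_window_le {S : Set (Euc d)} {N : ℕ} {ρ : ℝ} (hN : 0 < N)
    (hρ : 0 ≤ ρ) (h : ∀ v ∈ S, v ≠ 0 → ∀ k, aVec A v (k + 1) (k + N) ≤ N * ρ) :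
    UniformAngleBound A S ρ := by
  refine ⟨N * (π / 2), by positivity, fun v hv hv0 k n => ?_⟩
  have blocks : ∀ q k, aVec A v (k + 1) (k + q * N) ≤ (q * N : ℕ) * ρ := by
    intro q
    induction q with
    | zero => simp [aVec]
    | succ q ih =>
      intro k
      rw [add_mul, one_mul, add_comm (q * N), aVec_window_add]
      have := h v hv hv0 k
      have := ih (k + N)
      push_cast at *
      linarith
  obtain ⟨q, s, hs, rfl⟩ : ∃ q s, s < N ∧ n = q * N + s :=
    ⟨n / N, n % N, Nat.mod_lt n hN, (Nat.div_add_mod' n N).symm⟩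
  rw [aVec_window_add]
  have h1 := blocks q k
  have h2 := aVec_window_le (A := A) v (k + q * N) s
  have h3 : (s : ℝ) ≤ N := by exact_mod_cast hs.le
  push_cast at *
  nlinarith [pi_pos]

theorem uniformAngleBound_of_tendsto {V : Submodule ℝ (Euc d)} {t ε : ℝ} (ht : 0 ≤ t)
    (hε : 0 < ε)
    (h : Tendsto (fun n : ℕ =>
      sSup {x : ℝ | ∃ v ∈ V, v ≠ 0 ∧ ∃ k : ℕ, x = aVec A v (k + 1) (k + n)} / n) atTop (𝓝 t)) :
    UniformAngleBound A V (t + ε) := by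
  obtain ⟨N, hN, hlt⟩ :=
    ((eventually_gt_atTop 0).and (h.eventually_lt_const (lt_add_of_pos_right t hε))).exists
  refine uniformAngleBound_of_window_le hN (by positivity) fun v hv hv0 k => ?_
  have hbdd : BddAbove {x : ℝ | ∃ v ∈ V, v ≠ 0 ∧ ∃ k : ℕ, x = aVec A v (k + 1) (k + N)} :=
    ⟨N * (π / 2), by rintro _ ⟨w, -, -, j, rfl⟩; exact aVec_window_le w j N⟩
  have := le_csSup hbdd ⟨v, hv, hv0, k, rfl⟩
  rw [div_lt_iff₀ (by positivity)] at hlt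
  linarith

end AngularValue

theorem exists_crossing_time {x y : ℕ → ℝ} (hx : ∀ m, 0 < x m) (hy : ∀ m, 0 < y m)
    {c r δ : ℝ} (hc : 0 ≤ c) (hr0 : 0 ≤ r) (hr1 : r < 1) (hδ : 0 < δ)
    (hdecay : ∀ a b, a ≤ b → y b * x a ≤ c * r ^ (b - a) * (y a * x b))
    {s : ℕ} (hs : c * r ^ s ≤ δ ^ 2) :
    ∃ τ, (∀ m < τ, x m ≤ δ * y m) ∧ ∀ m, τ + s ≤ m → y m ≤ δ * x m := by
  have hex : ∃ m, δ * y m ≤ x m := by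
    obtain ⟨n, hn⟩ := exists_pow_lt_of_lt_one
      (show 0 < x 0 / (δ * (c + 1) * y 0) by have := hx 0; have := hy 0; positivity) hr1
    rw [lt_div_iff₀ (by have := hy 0; positivity)] at hn
    refine ⟨n, le_of_mul_le_mul_right ?_ (hx 0)⟩
    have hdecay0 : y n * x 0 ≤ c * r ^ n * (y 0 * x n) := by simpa using hdecay 0 n n.zero_le
    have hslack : 0 ≤ r ^ n * δ * y 0 * x n := by have := hy 0; have := hx n; positivity
    calc δ * y n * x 0 ≤ δ * (c * r ^ n * (y 0 * x n)) := by
          rw [mul_assoc]; exact mul_le_mul_of_nonneg_left hdecay0 hδ.le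
      _ ≤ r ^ n * (δ * (c + 1) * y 0) * x n := by nlinarith
      _ ≤ x 0 * x n := by gcongr; exact (hx n).le
      _ = x n * x 0 := mul_comm _ _
  classical
  refine ⟨Nat.find hex, fun m hm => (not_le.1 (Nat.find_min hex hm)).le, fun m hm => ?_⟩
  set τ := Nat.find hex
  have hτ : δ * y τ ≤ x τ := Nat.find_spec hex
  refine le_of_mul_le_mul_right ?_ (hx τ)
  have := hy τ
  have := hx m
  calc y m * x τ ≤ c * r ^ (m - τ) * (y τ * x m) := hdecay τ m (by omega)
    _ ≤ c * r ^ s * (y τ * x m) := by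
      gcongr c * ?_ * _
      exact pow_le_pow_of_le_one hr0 hr1.le (by omega)
    _ ≤ δ ^ 2 * (y τ * x m) := by gcongr
    _ = δ * (δ * y τ) * x m := by ring
    _ ≤ δ * x τ * x m := by gcongr
    _ = δ * x m * x τ := by ring

section Dominance

variable {d : ℕ} {A : ℕ → (Euc d →L[ℝ] Euc d)}

theorem aVec_add_le_of_dominance {u r : Euc d} {τ s : ℕ} {δ ρ Cu Cr : ℝ} (hδ : δ < 1)
    (hρ : 0 ≤ ρ) (hu : ∀ m, Phi A m 0 u ≠ 0) (hr : ∀ m, Phi A m 0 r ≠ 0)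
    (hearly : ∀ m < τ, ‖Phi A m 0 u‖ ≤ δ * ‖Phi A m 0 r‖)
    (hlate : ∀ m, τ + s ≤ m → ‖Phi A m 0 r‖ ≤ δ * ‖Phi A m 0 u‖)
    (hboundu : ∀ k n : ℕ, aVec A u (k + 1) (k + n) ≤ n * ρ + Cu)
    (hboundr : ∀ k n : ℕ, aVec A r (k + 1) (k + n) ≤ n * ρ + Cr) (k n : ℕ) :
    aVec A (u + r) (k + 1) (k + n) ≤
      n * (ρ + 2 * perturbationAngle δ) + (Cr + Cu + (s + 1) * (π / 2)) := by
  obtain ⟨n₁, n₂, n₃, rfl, h₁, h₂, h₃⟩ : ∃ n₁ n₂ n₃, n = n₁ + n₂ + n₃ ∧ (n₁ = 0 ∨ k + n₁ < τ) ∧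
      n₂ ≤ s + 1 ∧ (n₃ = 0 ∨ τ + s ≤ k + n₁ + n₂) := by
    obtain ⟨n₁, hn₁⟩ : ∃ n₁, n₁ = min n (τ - 1 - k) := ⟨_, rfl⟩
    obtain ⟨n₂, hn₂⟩ : ∃ n₂, n₂ = min (n - n₁) (τ + s - (k + n₁)) := ⟨_, rfl⟩
    exact ⟨n₁, n₂, n - n₁ - n₂, by omega, by omega, by omega, by omega⟩
  have early : aVec A (u + r) (k + 1) (k + n₁) ≤
      aVec A r (k + 1) (k + n₁) + n₁ * (2 * perturbationAngle δ) :=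
    aVec_window_le_of_step_le fun j hkj hj => by
      rw [map_add, map_add, add_comm (Phi A (j - 1) 0 u), add_comm (Phi A j 0 u)]
      exact vecAngle_add_add_le (hr _) (hr _) hδ (hearly _ (by omega)) (hearly _ (by omega))
  have middle := aVec_window_le (A := A) (u + r) (k + n₁) n₂
  have late : aVec A (u + r) (k + n₁ + n₂ + 1) (k + n₁ + n₂ + n₃) ≤
      aVec A u (k + n₁ + n₂ + 1) (k + n₁ + n₂ + n₃) + n₃ * (2 * perturbationAngle δ) :=
    aVec_window_le_of_step_le fun j hkj hj => by
      rw [map_add, map_add]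
      exact vecAngle_add_add_le (hu _) (hu _) hδ (hlate _ (by omega)) (hlate _ (by omega))
  rw [show k + (n₁ + n₂ + n₃) = k + (n₁ + (n₂ + n₃)) by ring, aVec_window_add, aVec_window_add]
  have hn₂ : (n₂ : ℝ) ≤ s + 1 := by exact_mod_cast h₂
  have := hboundr k n₁
  have := hboundu (k + n₁ + n₂) n₃
  have := perturbationAngle_nonneg δ
  push_cast
  nlinarith [pi_pos]

end Dominance

section Dichotomy

variable {d : ℕ} {A : ℕ → (Euc d →L[ℝ] Euc d)} {Q : ℕ → (Euc d →L[ℝ] Euc d)}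

theorem apply_Phi_zero_apply (hcomm : ∀ n m, Q n ∘L Phi A n m = Phi A n m ∘L Q m) (n : ℕ)
    (v : Euc d) : Q n (Phi A n 0 v) = Phi A n 0 (Q 0 v) :=
  DFunLike.congr_fun (hcomm n 0) v

theorem norm_Phi_le_of_stable (hcomm : ∀ n m, Q n ∘L Phi A n m = Phi A n m ∘L Q m)
    {K σ : ℝ} (hS : ∀ n m, m ≤ n → ‖Phi A n m ∘L Q m‖ ≤ K * σ ^ (n - m))
    {r : Euc d} (hr : Q 0 r = r) {a b : ℕ} (hab : a ≤ b) :
    ‖Phi A b 0 r‖ ≤ K * σ ^ (b - a) * ‖Phi A a 0 r‖ := by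
  have : Phi A b 0 r = (Phi A b a ∘L Q a) (Phi A a 0 r) := by
    rw [ContinuousLinearMap.comp_apply, apply_Phi_zero_apply hcomm, hr,
      ← ContinuousLinearMap.comp_apply, Phi_comp_Phi_zero hab]
  rw [this]
  exact (ContinuousLinearMap.le_opNorm _ _).trans (by gcongr; exact hS b a hab)

theorem norm_Phi_le_of_unstable (hA : ∀ n, IsUnit (A n))
    (hcomm : ∀ n m, Q n ∘L Phi A n m = Phi A n m ∘L Q m)
    {K σ : ℝ} (hU : ∀ n m, m ≤ n → ‖Phi A m n ∘L (1 - Q n)‖ ≤ K * (σ ^ (n - m))⁻¹)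
    {u : Euc d} (hu : Q 0 u = 0) {a b : ℕ} (hab : a ≤ b) :
    ‖Phi A a 0 u‖ ≤ K * (σ ^ (b - a))⁻¹ * ‖Phi A b 0 u‖ := by
  have : Phi A a 0 u = (Phi A a b ∘L (1 - Q b)) (Phi A b 0 u) := by
    rw [ContinuousLinearMap.comp_apply, sub_apply,
      apply_Phi_zero_apply hcomm, hu, map_zero, sub_zero, one_apply_eq_self,
      ← ContinuousLinearMap.comp_apply, Phi_comp_Phi_zero_of_isUnit hA hab]
  rw [this]
  exact (ContinuousLinearMap.le_opNorm _ _).trans (by gcongr; exact hU b a hab)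

theorem norm_mul_norm_le_of_dichotomy (hA : ∀ n, IsUnit (A n))
    (hcomm : ∀ n m, Q n ∘L Phi A n m = Phi A n m ∘L Q m) {K σs σu : ℝ}
    (hS : ∀ n m, m ≤ n → ‖Phi A n m ∘L Q m‖ ≤ K * σs ^ (n - m))
    (hU : ∀ n m, m ≤ n → ‖Phi A m n ∘L (1 - Q n)‖ ≤ K * (σu ^ (n - m))⁻¹)
    {r u : Euc d} (hr : Q 0 r = r) (hu : Q 0 u = 0) {a b : ℕ} (hab : a ≤ b) :
    ‖Phi A b 0 r‖ * ‖Phi A a 0 u‖ ≤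
      K ^ 2 * (σs / σu) ^ (b - a) * (‖Phi A a 0 r‖ * ‖Phi A b 0 u‖) := by
  have hr' := norm_Phi_le_of_stable hcomm hS hr hab
  calc _ ≤ (K * σs ^ (b - a) * ‖Phi A a 0 r‖) * (K * (σu ^ (b - a))⁻¹ * ‖Phi A b 0 u‖) :=
        mul_le_mul hr' (norm_Phi_le_of_unstable hA hcomm hU hu hab) (norm_nonneg _)
          ((norm_nonneg _).trans hr')
    _ = _ := by rw [div_pow, div_eq_mul_inv]; ring

theorem UniformAngleBound.of_dichotomy (hA : ∀ n, IsUnit (A n)) (hQ : Q 0 ∘L Q 0 = Q 0)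
    (hcomm : ∀ n m, Q n ∘L Phi A n m = Phi A n m ∘L Q m) {K σs σu : ℝ} (hσs : 0 ≤ σs)
    (hσ : σs < σu) (hS : ∀ n m, m ≤ n → ‖Phi A n m ∘L Q m‖ ≤ K * σs ^ (n - m))
    (hU : ∀ n m, m ≤ n → ‖Phi A m n ∘L (1 - Q n)‖ ≤ K * (σu ^ (n - m))⁻¹)
    {S : Set (Euc d)} {ρ δ : ℝ} (hρ : 0 ≤ ρ) (hδ0 : 0 < δ) (hδ1 : δ < 1)
    (hstable : UniformAngleBound A (Set.range (Q 0)) ρ)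
    (hunstable : UniformAngleBound A ((fun v => v - Q 0 v) '' S) ρ) :
    UniformAngleBound A S (ρ + 2 * perturbationAngle δ) := by
  obtain ⟨Cr, hCr0, hCr⟩ := hstable
  obtain ⟨Cu, hCu0, hCu⟩ := hunstable
  have hσu : 0 < σu := hσs.trans_lt hσ
  obtain ⟨s, hs⟩ : ∃ s : ℕ, K ^ 2 * (σs / σu) ^ s ≤ δ ^ 2 := by
    obtain ⟨s, hs⟩ := exists_pow_lt_of_lt_one (show 0 < δ ^ 2 / (K ^ 2 + 1) by positivity)
      ((div_lt_one hσu).2 hσ)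
    rw [lt_div_iff₀ (by positivity)] at hs
    exact ⟨s, by nlinarith [pow_nonneg (div_nonneg hσs hσu.le) s]⟩
  refine ⟨Cr + Cu + (s + 1) * (π / 2), by positivity, fun v hv hv0 k n => ?_⟩
  have hslack : 0 ≤ n * (2 * perturbationAngle δ) + (s + 1) * (π / 2) := by
    have := perturbationAngle_nonneg δ
    positivity
  set r := Q 0 v
  set u := v - r
  have hQr : Q 0 r = r := DFunLike.congr_fun hQ v
  have hQu : Q 0 u = 0 := by rw [map_sub, hQr, sub_self]
  by_cases hu0 : u = 0
  · have := hCr v ⟨v, (sub_eq_zero.1 hu0).symm⟩ hv0 k n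
    linarith
  by_cases hr0 : r = 0
  · have := hCu v ⟨v, hv, show v - r = v by rw [hr0, sub_zero]⟩ hv0 k n
    linarith
  obtain ⟨τ, hearly, hlate⟩ := exists_crossing_time
    (x := fun m => ‖Phi A m 0 u‖) (y := fun m => ‖Phi A m 0 r‖)
    (fun m => norm_pos_iff.2 (Phi_zero_apply_ne_zero hA m hu0))
    (fun m => norm_pos_iff.2 (Phi_zero_apply_ne_zero hA m hr0)) (sq_nonneg K)
    (div_nonneg hσs hσu.le) ((div_lt_one hσu).2 hσ) hδ0
    (fun a b hab => norm_mul_norm_le_of_dichotomy hA hcomm hS hU hQr hQu hab) hs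
  rw [← sub_add_cancel v r]
  exact aVec_add_le_of_dominance hδ1 hρ (fun m => Phi_zero_apply_ne_zero hA m hu0)
    (fun m => Phi_zero_apply_ne_zero hA m hr0) hearly hlate
    (hCu u ⟨v, hv, rfl⟩ hu0) (hCr r ⟨v, rfl⟩ hr0) k n

end Dichotomy

theorem thetaBar1_le_pi_div_two {d : ℕ} {A : ℕ → (Euc d →L[ℝ] Euc d)}
    (V : Submodule ℝ (Euc d)) : thetaBar1 A V ≤ π / 2 :=
  thetaBar1_le_of_uniformAngleBound pi_div_two_pos.le
    ⟨0, le_rfl, fun v _ _ k n => by simpa using aVec_window_le v k n⟩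

theorem uniformAngleBound_of_fibers {d : ℕ} {A : ℕ → (Euc d →L[ℝ] Euc d)}
    (hA : ∀ n, IsUnit (A n)) {ℓ : ℕ} {K : ℝ} {σm σp : ℕ → ℝ}
    (hσ0 : ∀ i, 1 ≤ i → i ≤ ℓ → 0 < σm i)
    (hσ1 : ∀ i, 1 ≤ i → i ≤ ℓ → σm i ≤ σp i)
    (hσ2 : ∀ i, 1 ≤ i → i < ℓ → σp (i + 1) < σm i)
    {P : ℕ → ℕ → (Euc d →L[ℝ] Euc d)}
    (hproj : ∀ n i, 1 ≤ i → i ≤ ℓ + 1 → P n i ∘L P n i = P n i)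
    (hPl : ∀ n, P n (ℓ + 1) = 0)
    (hcomm : ∀ n m i, 1 ≤ i → i ≤ ℓ + 1 → P n i ∘L Phi A n m = Phi A n m ∘L P m i)
    (hbndS : ∀ i, 1 ≤ i → i ≤ ℓ → ∀ n m : ℕ, m ≤ n →
      ‖Phi A n m ∘L P m (i + 1)‖ ≤ K * (if i = ℓ then (0 : ℝ) else σp (i + 1)) ^ (n - m))
    (hbndU : ∀ i, 1 ≤ i → i ≤ ℓ → ∀ n m : ℕ, m ≤ n →
      ‖Phi A m n ∘L (1 - P n (i + 1))‖ ≤ K * (σm i ^ (n - m))⁻¹)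
    {ρ δ : ℝ} (hρ : 0 ≤ ρ) (hδ0 : 0 < δ) (hδ1 : δ < 1)
    (hfib : ∀ i, 1 ≤ i → i ≤ ℓ → UniformAngleBound A (fiberW P 0 i) ρ)
    {i : ℕ} (hi1 : 1 ≤ i) (hiℓ : i ≤ ℓ) :
    UniformAngleBound A {v | P 0 i v = v} (ρ + 2 * ((ℓ - i : ℕ) : ℝ) * perturbationAngle δ) := by
  refine Nat.decreasingInduction'
    (P := fun i => UniformAngleBound A {v | P 0 i v = v}
      (ρ + 2 * ((ℓ - i : ℕ) : ℝ) * perturbationAngle δ)) (fun i hiℓ hi ih => ?_) hiℓ ?_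
  · have hQ := hproj 0 (i + 1) (by omega) (by omega)
    have hstable : UniformAngleBound A (Set.range (P 0 (i + 1)))
        (ρ + 2 * ((ℓ - (i + 1) : ℕ) : ℝ) * perturbationAngle δ) :=
      ih.mono (by rintro _ ⟨w, rfl⟩; exact DFunLike.congr_fun hQ w) le_rfl
    have hunstable : UniformAngleBound A ((fun v => v - P 0 (i + 1) v) '' {v | P 0 i v = v})
        (ρ + 2 * ((ℓ - (i + 1) : ℕ) : ℝ) * perturbationAngle δ) := by
      refine (hfib i (by omega) hiℓ.le).mono ?_
        (le_add_of_nonneg_right (mul_nonneg (by positivity) (perturbationAngle_nonneg δ)))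
      rintro _ ⟨v, hv, rfl⟩
      exact ⟨v, show P 0 i v - P 0 (i + 1) v = v - P 0 (i + 1) v by rw [show P 0 i v = v from hv]⟩
    have hS : ∀ n m, m ≤ n → ‖Phi A n m ∘L P m (i + 1)‖ ≤ K * σp (i + 1) ^ (n - m) :=
      fun n m hmn => by simpa [hiℓ.ne] using hbndS i (by omega) hiℓ.le n m hmn
    refine (UniformAngleBound.of_dichotomy (Q := fun n => P n (i + 1)) hA hQ
      (fun n m => hcomm n m (i + 1) (by omega) (by omega))
      ((hσ0 (i + 1) (by omega) hiℓ).le.trans (hσ1 (i + 1) (by omega) hiℓ))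
      (hσ2 i (by omega) hiℓ) hS (hbndU i (by omega) hiℓ.le)
      (add_nonneg hρ (mul_nonneg (by positivity) (perturbationAngle_nonneg δ))) hδ0 hδ1
      hstable hunstable).mono subset_rfl (le_of_eq ?_)
    rw [show ℓ - i = ℓ - (i + 1) + 1 by omega]
    push_cast
    ring
  · refine (hfib ℓ (hi1.trans hiℓ) le_rfl).mono (fun v hv => ⟨v, ?_⟩) (by simp)
    show P 0 ℓ v - P 0 (ℓ + 1) v = v
    rw [hPl, zero_apply, sub_zero]
    exact hv

theorem first_inner_angular_value_eq_max_over_fibers_general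
    {d : ℕ} (A : ℕ → (Euc d →L[ℝ] Euc d)) (hA : ∀ n, IsUnit (A n))
    (ℓ : ℕ) (hℓ : 1 ≤ ℓ) (K : ℝ)
    (σm σp : ℕ → ℝ)
    (hσ0 : ∀ i, 1 ≤ i → i ≤ ℓ → 0 < σm i)
    (hσ1 : ∀ i, 1 ≤ i → i ≤ ℓ → σm i ≤ σp i)
    (hσ2 : ∀ i, 1 ≤ i → i < ℓ → σp (i + 1) < σm i)
    (P : ℕ → ℕ → (Euc d →L[ℝ] Euc d))
    (hproj : ∀ n i, 1 ≤ i → i ≤ ℓ + 1 → P n i ∘L P n i = P n i)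
    (hP1 : ∀ n, P n 1 = 1)
    (hPl : ∀ n, P n (ℓ + 1) = 0)
    (hcomm : ∀ n m i, 1 ≤ i → i ≤ ℓ + 1 → P n i ∘L Phi A n m = Phi A n m ∘L P m i)
    (hbndS : ∀ i, 1 ≤ i → i ≤ ℓ → ∀ n m : ℕ, m ≤ n →
      ‖Phi A n m ∘L P m (i + 1)‖ ≤ K * (if i = ℓ then (0 : ℝ) else σp (i + 1)) ^ (n - m))
    (hbndU : ∀ i, 1 ≤ i → i ≤ ℓ → ∀ n m : ℕ, m ≤ n →
      ‖Phi A m n ∘L (1 - P n (i + 1))‖ ≤ K * (σm i ^ (n - m))⁻¹)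
    (hunif : ∀ i, 1 ≤ i → i ≤ ℓ →
      Tendsto (fun n : ℕ =>
          (sSup {x : ℝ | ∃ v ∈ fiberW P 0 i, v ≠ 0 ∧
            ∃ k : ℕ, x = aVec A v (k + 1) (k + n)}) / n) atTop
        (nhds (thetaBar1 A (fiberW P 0 i)))) :
    thetaBar1 A (⊤ : Submodule ℝ (Euc d)) =
      sSup {x : ℝ | ∃ i : ℕ, 1 ≤ i ∧ i ≤ ℓ ∧ x = thetaBar1 A (fiberW P 0 i)} := by
  set M := sSup {x : ℝ | ∃ i : ℕ, 1 ≤ i ∧ i ≤ ℓ ∧ x = thetaBar1 A (fiberW P 0 i)}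
  have hle : ∀ i, 1 ≤ i → i ≤ ℓ → thetaBar1 A (fiberW P 0 i) ≤ M := fun i h1 h2 =>
    le_csSup ⟨π / 2, by rintro _ ⟨j, -, -, rfl⟩; exact thetaBar1_le_pi_div_two _⟩ ⟨i, h1, h2, rfl⟩
  have hM0 : 0 ≤ M := (thetaBar1_nonneg _).trans (hle 1 le_rfl hℓ)
  refine le_antisymm (le_of_forall_pos_le_add fun ε hε => ?_)
    (csSup_le ⟨_, 1, le_rfl, hℓ, rfl⟩ (by rintro _ ⟨i, -, -, rfl⟩; exact thetaBar1_mono le_top))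
  have hfib : ∀ i, 1 ≤ i → i ≤ ℓ → UniformAngleBound A (fiberW P 0 i) (M + ε) :=
    fun i h1 h2 => (uniformAngleBound_of_tendsto (thetaBar1_nonneg _) hε (hunif i h1 h2)).mono
      subset_rfl (by linarith [hle i h1 h2])
  have hbound : ∀ δ ∈ Set.Ioo (0 : ℝ) 1,
      thetaBar1 A ⊤ ≤ M + ε + 2 * ((ℓ - 1 : ℕ) : ℝ) * perturbationAngle δ := fun δ ⟨hδ0, hδ1⟩ =>
    thetaBar1_le_of_uniformAngleBound
      (add_nonneg (by positivity) (mul_nonneg (by positivity) (perturbationAngle_nonneg δ)))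
      ((uniformAngleBound_of_fibers hA hσ0 hσ1 hσ2 hproj hPl hcomm hbndS hbndU (by positivity)
        hδ0 hδ1 hfib le_rfl hℓ).mono (fun v _ => by simp [hP1]) le_rfl)
  refine ge_of_tendsto ?_ (Filter.mem_of_superset (Ioo_mem_nhdsGT one_pos) hbound)
  simpa using ((tendsto_perturbationAngle_zero.const_mul (2 * ((ℓ - 1 : ℕ) : ℝ))).const_add
    (M + ε)).mono_left nhdsWithin_le_nhds

/-- **Theorem 3.6 / Th4.1.** Under the spectral hypotheses, if inner and
uniform inner angular values agree within every fiber, then the first inner angular value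
satisfies `θ̄₁(ℝ^d) = max_{i=1,…,ℓ} θ̄₁(𝒲_0^i)`. -/
theorem first_inner_angular_value_eq_max_over_fibers
    {d : ℕ} (A : ℕ → (Euc d →L[ℝ] Euc d)) (hA : ∀ n, IsUnit (A n))
    (hbd : ∃ Cb : ℝ, ∀ n, ‖A n‖ + ‖Ring.inverse (A n)‖ ≤ Cb)
    (ℓ : ℕ) (hℓ : 1 ≤ ℓ) (K : ℝ) (hK : 1 ≤ K)
    (σm σp : ℕ → ℝ)
    (hσ0 : ∀ i, 1 ≤ i → i ≤ ℓ → 0 < σm i)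
    (hσ1 : ∀ i, 1 ≤ i → i ≤ ℓ → σm i ≤ σp i)
    (hσ2 : ∀ i, 1 ≤ i → i < ℓ → σp (i + 1) < σm i)
    (P : ℕ → ℕ → (Euc d →L[ℝ] Euc d))
    (hproj : ∀ n i, 1 ≤ i → i ≤ ℓ + 1 → P n i ∘L P n i = P n i)
    (hP1 : ∀ n, P n 1 = 1)
    (hPl : ∀ n, P n (ℓ + 1) = 0)
    (hcomm : ∀ n m i, 1 ≤ i → i ≤ ℓ + 1 → P n i ∘L Phi A n m = Phi A n m ∘L P m i)
    (hrange : ∀ n i, 1 ≤ i → i ≤ ℓ → LinearMap.range (P n (i + 1) : Euc d →ₗ[ℝ] Euc d) ≤ LinearMap.range (P n i : Euc d →ₗ[ℝ] Euc d))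
    (hker : ∀ n i, 1 ≤ i → i ≤ ℓ → LinearMap.ker (P n i : Euc d →ₗ[ℝ] Euc d) ≤ LinearMap.ker (P n (i + 1) : Euc d →ₗ[ℝ] Euc d))
    (hbndS : ∀ i, 1 ≤ i → i ≤ ℓ → ∀ n m : ℕ, m ≤ n →
      ‖Phi A n m ∘L P m (i + 1)‖ ≤ K * (if i = ℓ then (0 : ℝ) else σp (i + 1)) ^ (n - m))
    (hbndU : ∀ i, 1 ≤ i → i ≤ ℓ → ∀ n m : ℕ, m ≤ n →
      ‖Phi A m n ∘L (1 - P n (i + 1))‖ ≤ K * (σm i ^ (n - m))⁻¹)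
    (hunif : ∀ i, 1 ≤ i → i ≤ ℓ →
      Tendsto (fun n : ℕ =>
          (sSup {x : ℝ | ∃ v ∈ fiberW P 0 i, v ≠ 0 ∧
            ∃ k : ℕ, x = aVec A v (k + 1) (k + n)}) / n) atTop
        (nhds (thetaBar1 A (fiberW P 0 i)))) :
    thetaBar1 A (⊤ : Submodule ℝ (Euc d)) =
      sSup {x : ℝ | ∃ i : ℕ, 1 ≤ i ∧ i ≤ ℓ ∧ x = thetaBar1 A (fiberW P 0 i)} :=
  first_inner_angular_value_eq_max_over_fibers_general A hA ℓ hℓ K σm σp hσ0 hσ1 hσ2 P hproj hP1 hPl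
    hcomm hbndS hbndU hunif
end
end
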